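/- Let k ≥ 1 and let f be of class Cᵏ. The control system ẋ = f(x,u) is locally exponentially stabilizable by a composition operator with a Cᵏ stationary symbol if and only if f has a Cᵏ stationary local section near the origin. -/

import Mathlib

/-! A section `α` yields the symbol `y ↦ α (-y)`, whose closed loop is `ẋ = -x`. Conversely, if the
closed loop `ẋ = g x` with `g = f ∘ h` is exponentially stable, then `g'(0)` is injective: a
trajectory starting on its kernel would, by Grönwall, stay close to its initial point for a time
after which it must already have decayed. The inverse function theorem then gives a `Cᵏ` local
right inverse `ψ` of `g`, and `α = h ∘ ψ` is a section. -/

open Filter Topology Set Function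

noncomputable section

abbrev Vec (n : ℕ) : Type := Fin n → ℝ

/-- `f`, viewed as a map defined on the set `s`, is *open at the point* `x₀ ∈ s`. -/
def OpenOnAt {X Y : Type*} [TopologicalSpace X] [TopologicalSpace Y]
    (f : X → Y) (s : Set X) (x₀ : X) : Prop :=
  ∀ U ∈ nhdsWithin x₀ s, f x₀ ∈ interior (f '' (U ∩ s))

/-- `x : [0,∞) → ℝⁿ` is a solution of `ẋ = g x` remaining in the domain `𝒪` of `g`. -/
def IsSolOn {n : ℕ} (𝒪 : Set (Vec n)) (g : Vec n → Vec n) (x : ℝ → Vec n) : Prop :=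
  ∀ t : ℝ, 0 ≤ t → x t ∈ 𝒪 ∧ HasDerivAt x (g (x t)) t

/-- the uniqueness criterion for `ẋ = g x` (`g` with domain `𝒪`): `g` is continuous and,
for every initial value near the origin, there is exactly one solution on `[0,∞)`. -/
def UniqCrit {n : ℕ} (𝒪 : Set (Vec n)) (g : Vec n → Vec n) : Prop :=
  ContinuousOn g 𝒪 ∧
    ∃ δ > (0:ℝ), ∀ x₀ : Vec n, ‖x₀‖ < δ →
      ((∃ x : ℝ → Vec n, IsSolOn 𝒪 g x ∧ x 0 = x₀) ∧
        ∀ x y : ℝ → Vec n, IsSolOn 𝒪 g x → IsSolOn 𝒪 g y → x 0 = x₀ → y 0 = x₀ →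
          ∀ t : ℝ, 0 ≤ t → x t = y t)

/-- the origin is a locally asymptotically stable equilibrium of `ẋ = g x`. -/
def LocAsympStable {n : ℕ} (𝒪 : Set (Vec n)) (g : Vec n → Vec n) : Prop :=
  (∀ ε > (0:ℝ), ∃ δ > (0:ℝ), ∀ x : ℝ → Vec n, IsSolOn 𝒪 g x → ‖x 0‖ < δ →
      ∀ t : ℝ, 0 ≤ t → ‖x t‖ < ε) ∧
    ∃ δ₀ > (0:ℝ), ∀ x : ℝ → Vec n, IsSolOn 𝒪 g x → ‖x 0‖ < δ₀ →
      Tendsto x atTop (nhds 0)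

/-- the origin is a locally exponentially stable equilibrium of `ẋ = g x`. -/
def LocExpStable {n : ℕ} (𝒪 : Set (Vec n)) (g : Vec n → Vec n) : Prop :=
  ∃ δ > (0:ℝ), ∃ M > (0:ℝ), ∃ lam > (0:ℝ),
    ∀ x : ℝ → Vec n, IsSolOn 𝒪 g x → ‖x 0‖ < δ →
      ∀ t : ℝ, 0 ≤ t → ‖x t‖ ≤ M * Real.exp (-lam * t) * ‖x 0‖

open Real Metric

lemma norm_exp_neg_smul_le {E : Type*} [SeminormedAddCommGroup E] [NormedSpace ℝ E] (x₀ : E)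
    {t : ℝ} (ht : 0 ≤ t) : ‖exp (-t) • x₀‖ ≤ ‖x₀‖ := by
  rw [norm_smul, norm_of_nonneg (exp_pos _).le]
  exact mul_le_of_le_one_left (norm_nonneg _) (exp_le_one_iff.2 (by linarith))

section NegativeIdentity

variable {n : ℕ} {𝒪 : Set (Vec n)} {g : Vec n → Vec n}

lemma IsSolOn.eq_exp_neg_smul (hg : ∀ y ∈ 𝒪, g y = -y) {x : ℝ → Vec n} (hx : IsSolOn 𝒪 g x)
    {t : ℝ} (ht : 0 ≤ t) : x t = exp (-t) • x 0 := by
  have hderiv : ∀ s ∈ Ici (0 : ℝ), HasDerivAt (fun s => exp s • x s) 0 s := by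
    intro s hs
    obtain ⟨hmem, hx'⟩ := hx s hs
    rw [hg _ hmem] at hx'
    exact ((hasDerivAt_exp s).smul hx').congr_deriv (by simp)
  have hconst : exp t • x t = x 0 := by
    simpa using constant_of_has_deriv_right_zero
      (fun s hs => (hderiv s hs.1).continuousAt.continuousWithinAt)
      (fun s hs => (hderiv s hs.1).hasDerivWithinAt) t ⟨ht, le_rfl⟩
  rw [← hconst, smul_smul, ← exp_add, neg_add_cancel, exp_zero, one_smul]

lemma isSolOn_exp_neg_smul {r : ℝ} (hg : ∀ y ∈ ball 0 r, g y = -y) {x₀ : Vec n}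
    (hx₀ : ‖x₀‖ < r) : IsSolOn (ball 0 r) g (fun t => exp (-t) • x₀) := by
  intro t ht
  have hmem : exp (-t) • x₀ ∈ ball 0 r :=
    mem_ball_zero_iff.2 ((norm_exp_neg_smul_le x₀ ht).trans_lt hx₀)
  refine ⟨hmem, ?_⟩
  rw [hg _ hmem, ← neg_smul]
  simpa using ((hasDerivAt_neg t).exp).smul_const x₀

lemma uniqCrit_of_eq_neg {r : ℝ} (hr : 0 < r) (hg : ∀ y ∈ ball 0 r, g y = -y) :
    UniqCrit (ball 0 r) g := by
  refine ⟨continuousOn_neg.congr hg, r, hr, fun x₀ hx₀ => ⟨?_, ?_⟩⟩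
  · exact ⟨_, isSolOn_exp_neg_smul hg hx₀, by simp⟩
  · intro x y hx hy hx0 hy0 t ht
    rw [hx.eq_exp_neg_smul hg ht, hy.eq_exp_neg_smul hg ht, hx0, hy0]

lemma locExpStable_of_eq_neg (hg : ∀ y ∈ 𝒪, g y = -y) : LocExpStable 𝒪 g := by
  refine ⟨1, one_pos, 1, one_pos, 1, one_pos, fun x hx _ t ht => ?_⟩
  rw [hx.eq_exp_neg_smul hg ht, norm_smul, norm_of_nonneg (exp_pos _).le, one_mul, neg_one_mul]

end NegativeIdentity

theorem exists_stabilizing_symbol_of_section {n : ℕ} {F : Type*} [NormedAddCommGroup F]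
    [NormedSpace ℝ F] {k : WithTop ℕ∞} {S : Set F} {f : F → Vec n} {p : F} {𝒪 : Set (Vec n)}
    (hO : IsOpen 𝒪) (h0O : (0 : Vec n) ∈ 𝒪) {α : Vec n → F} (hmap : MapsTo α 𝒪 S)
    (hα0 : α 0 = p) (hαC : ContDiffOn ℝ k α 𝒪) (hsec : ∀ y ∈ 𝒪, f (α y) = y) :
    ∃ 𝒪' : Set (Vec n), IsOpen 𝒪' ∧ (0 : Vec n) ∈ 𝒪' ∧
      ∃ h : Vec n → F, MapsTo h 𝒪' S ∧ h 0 = p ∧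
        ContDiffOn ℝ k h 𝒪' ∧ UniqCrit 𝒪' (f ∘ h) ∧ LocExpStable 𝒪' (f ∘ h) := by
  obtain ⟨r, hr, hball⟩ := Metric.isOpen_iff.1 hO 0 h0O
  have hneg : MapsTo Neg.neg (ball (0 : Vec n) r) 𝒪 := fun y hy =>
    hball (by simpa using hy)
  have hclosed : ∀ y ∈ ball (0 : Vec n) r, (f ∘ (α ∘ Neg.neg)) y = -y :=
    fun y hy => hsec _ (hneg hy)
  exact ⟨ball 0 r, isOpen_ball, mem_ball_self hr, α ∘ Neg.neg, hmap.comp hneg,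
    by simpa using hα0, hαC.comp contDiff_neg.contDiffOn hneg,
    uniqCrit_of_eq_neg hr hclosed, locExpStable_of_eq_neg hclosed⟩

lemma gronwallBound_zero_mul (K c ε x : ℝ) :
    gronwallBound 0 K (c * ε) x = c * gronwallBound 0 K ε x := by
  unfold gronwallBound
  split_ifs <;> ring

lemma norm_sub_le_gronwallBound_of_map_eq_zero {E : Type*} [NormedAddCommGroup E]
    [NormedSpace ℝ E] {g : E → E} {A : E →L[ℝ] E} {x : ℝ → E} {T c : ℝ} (hT : 0 ≤ T)
    (hx : ∀ t ∈ Icc 0 T, HasDerivAt x (g (x t)) t) (hAx : A (x 0) = 0)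
    (hg : ∀ t ∈ Icc 0 T, ‖g (x t) - A (x t)‖ ≤ c) :
    ‖x T - x 0‖ ≤ gronwallBound 0 ‖A‖ c T := by
  -- the constant trajectory `x 0` solves `ẋ = A x` exactly
  have := dist_le_of_approx_trajectories_ODE (v := fun _ => A) (g := fun _ => x 0) (g' := 0)
    (εg := 0) (fun _ => A.lipschitz)
    (fun t ht => (hx t ht).continuousAt.continuousWithinAt)
    (fun t ht => (hx t (Ico_subset_Icc_self ht)).hasDerivWithinAt)
    (fun t ht => by simpa [dist_eq_norm] using hg t (Ico_subset_Icc_self ht))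
    continuousOn_const (fun _ _ => hasDerivWithinAt_const _ _ (x 0))
    (fun _ _ => by simp [hAx]) (dist_self (x 0)).le T ⟨hT, le_rfl⟩
  simpa [dist_eq_norm] using this

lemma exists_mul_exp_neg_mul_lt (M : ℝ) {lam η : ℝ} (hlam : 0 < lam) (hη : 0 < η) :
    ∃ T > 0, M * exp (-lam * T) < η := by
  have : Tendsto (fun t => M * exp (-lam * t)) atTop (𝓝 (M * 0)) :=
    (tendsto_exp_atBot.comp (tendsto_id.const_mul_atTop_of_neg (neg_neg_of_pos hlam))).const_mul M
  rw [mul_zero] at this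
  exact ((eventually_gt_atTop 0).and (this.eventually_lt_const hη)).exists

lemma exists_gronwallBound_mul_lt (K M T : ℝ) {η : ℝ} (hη : 0 < η) :
    ∃ ε > 0, gronwallBound 0 K (ε * M) T < η := by
  have : Tendsto (fun ε => gronwallBound 0 K (ε * M) T) (𝓝[>] 0) (𝓝 0) := by
    have := ((gronwallBound_continuous_ε 0 K T).comp (continuous_mul_const M)).tendsto 0
    simpa [Function.comp_def, gronwallBound_ε0_δ0] using this.mono_left nhdsWithin_le_nhds
  exact (eventually_mem_nhdsWithin.and (this.eventually_lt_const hη)).exists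

lemma exists_mem_ker_norm_eq {E : Type*} [NormedAddCommGroup E] [NormedSpace ℝ E]
    {A : E →L[ℝ] E} {v : E} (hv : v ≠ 0) (hAv : A v = 0) {r : ℝ} (hr : 0 ≤ r) :
    ∃ x₀ : E, ‖x₀‖ = r ∧ A x₀ = 0 :=
  ⟨(r * ‖v‖⁻¹) • v, by simpa using norm_smul_inv_norm' (𝕜 := ℝ) hr hv, by simp [hAv]⟩

theorem LocExpStable.injective_of_hasFDerivAt {n : ℕ} {𝒪 : Set (Vec n)} {g : Vec n → Vec n}
    {A : Vec n →L[ℝ] Vec n} (hstab : LocExpStable 𝒪 g) (hg0 : g 0 = 0) (hA : HasFDerivAt g A 0)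
    (hex : ∃ δ > (0 : ℝ), ∀ x₀ : Vec n, ‖x₀‖ < δ → ∃ x, IsSolOn 𝒪 g x ∧ x 0 = x₀) :
    Injective A := by
  rw [injective_iff_map_eq_zero]
  by_contra! ⟨v, hAv, hv⟩
  obtain ⟨δ, hδ, M, hM, lam, hlam, hdecay⟩ := hstab
  obtain ⟨δ', hδ', hex⟩ := hex
  obtain ⟨T, hT, hMT⟩ := exists_mul_exp_neg_mul_lt M hlam one_half_pos
  obtain ⟨ε, hε, hεT⟩ := exists_gronwallBound_mul_lt ‖A‖ M T one_half_pos
  obtain ⟨ρ, hρ, hlin⟩ : ∃ ρ > 0, ∀ y : Vec n, ‖y‖ < ρ → ‖g y - A y‖ ≤ ε * ‖y‖ := by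
    obtain ⟨ρ, hρ, h⟩ := Metric.eventually_nhds_iff.1 (hA.isLittleO.def hε)
    exact ⟨ρ, hρ, fun y hy => by simpa [hg0] using h (mem_ball_zero_iff.2 hy)⟩
  obtain ⟨r, hr, hrδ, hrδ', hrρ⟩ : ∃ r > 0, r < δ ∧ r < δ' ∧ r < ρ / M := by
    have hsmall : ∀ᶠ r in 𝓝 (0 : ℝ), r < δ ∧ r < δ' ∧ r < ρ / M :=
      (eventually_lt_nhds hδ).and ((eventually_lt_nhds hδ').and
        (eventually_lt_nhds (div_pos hρ hM)))
    exact (eventually_mem_nhdsWithin.and (hsmall.filter_mono nhdsWithin_le_nhds) :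
      ∀ᶠ r in 𝓝[>] (0 : ℝ), _).exists
  obtain ⟨x₀, hx₀, hAx₀⟩ := exists_mem_ker_norm_eq hv hAv hr.le
  obtain ⟨x, hx, rfl⟩ := hex x₀ (hx₀ ▸ hrδ')
  have hdecay' : ∀ t, 0 ≤ t → ‖x t‖ ≤ M * exp (-lam * t) * r := fun t ht =>
    hx₀ ▸ hdecay x hx (hx₀ ▸ hrδ) t ht
  have hnear : ‖x T - x 0‖ ≤ r * gronwallBound 0 ‖A‖ (ε * M) T := by
    rw [← gronwallBound_zero_mul]
    refine norm_sub_le_gronwallBound_of_map_eq_zero hT.le (fun t ht => (hx t ht.1).2) hAx₀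
      fun t ht => ?_
    have hexp : exp (-lam * t) ≤ 1 := exp_le_one_iff.2 (by nlinarith [ht.1])
    have hxt : ‖x t‖ ≤ M * r := by
      nlinarith [hdecay' t ht.1, mul_le_mul_of_nonneg_left hexp (mul_nonneg hM.le hr.le)]
    have hMr : M * r < ρ := by rwa [lt_div_iff₀' hM] at hrρ
    calc ‖g (x t) - A (x t)‖ ≤ ε * ‖x t‖ := hlin _ (hxt.trans_lt hMr)
      _ ≤ r * (ε * M) := by nlinarith
  have hfar : ‖x T‖ < r / 2 := by nlinarith [hdecay' T hT.le]
  have := norm_le_norm_add_norm_sub' (x 0) (x T)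
  nlinarith [norm_sub_rev (x 0) (x T)]

theorem ContDiffAt.exists_rightInverse_of_injective_fderiv {E : Type*} [NormedAddCommGroup E]
    [NormedSpace ℝ E] [FiniteDimensional ℝ E] {k : WithTop ℕ∞} (hk : k ≠ 0) {g : E → E} {a : E}
    (hg : ContDiffAt ℝ k g a) (hinj : Injective (fderiv ℝ g a)) :
    ∃ ψ : E → E, ψ (g a) = a ∧ ContDiffAt ℝ k ψ (g a) ∧ ∀ᶠ y in 𝓝 (g a), g (ψ y) = y := by
  let A : E ≃L[ℝ] E :=
    (LinearEquiv.ofInjectiveEndo (fderiv ℝ g a : E →ₗ[ℝ] E) hinj).toContinuousLinearEquiv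
  have hA : HasFDerivAt g (A : E →L[ℝ] E) a := (hg.differentiableAt hk).hasFDerivAt
  exact ⟨hg.localInverse hA hk, hg.localInverse_apply_image hA hk, hg.to_localInverse hA hk,
    (hg.hasStrictFDerivAt' hA hk).eventually_right_inverse⟩

theorem exists_section_of_stabilizing_symbol {n : ℕ} {F : Type*} [NormedAddCommGroup F]
    [NormedSpace ℝ F] {k : ℕ} (hk : k ≠ 0) {S : Set F} {f : F → Vec n} {p : F}
    (hfC : ContDiffOn ℝ k f S) (hf0 : f p = 0) {𝒪 : Set (Vec n)} (hO : IsOpen 𝒪)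
    (h0O : (0 : Vec n) ∈ 𝒪) {h : Vec n → F} (hmap : MapsTo h 𝒪 S) (hh0 : h 0 = p)
    (hhC : ContDiffOn ℝ k h 𝒪) (huniq : UniqCrit 𝒪 (f ∘ h)) (hstab : LocExpStable 𝒪 (f ∘ h)) :
    ∃ 𝒪' : Set (Vec n), IsOpen 𝒪' ∧ (0 : Vec n) ∈ 𝒪' ∧
      ∃ α : Vec n → F, MapsTo α 𝒪' S ∧ α 0 = p ∧
        ContDiffOn ℝ k α 𝒪' ∧ ∀ y ∈ 𝒪', f (α y) = y := by
  have hk' : (k : WithTop ℕ∞) ≠ 0 := by exact_mod_cast hk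
  have hg0 : (f ∘ h) 0 = 0 := by simp [hh0, hf0]
  have hgC : ContDiffAt ℝ k (f ∘ h) 0 := (hfC.comp hhC hmap).contDiffAt (hO.mem_nhds h0O)
  obtain ⟨-, δ, hδ, hsol⟩ := huniq
  have hinj : Injective (fderiv ℝ (f ∘ h) 0) :=
    hstab.injective_of_hasFDerivAt hg0 (hgC.differentiableAt hk').hasFDerivAt
      ⟨δ, hδ, fun x₀ hx₀ => (hsol x₀ hx₀).1⟩
  obtain ⟨ψ, hψ0, hψC, hψ⟩ := hgC.exists_rightInverse_of_injective_fderiv hk' hinj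
  rw [hg0] at hψ0 hψC hψ
  have hO_nhds : 𝒪 ∈ 𝓝 (ψ 0) := by rw [hψ0]; exact hO.mem_nhds h0O
  have hψO : ∀ᶠ y in 𝓝 0, ψ y ∈ 𝒪 := hψC.continuousAt.preimage_mem_nhds hO_nhds
  have hαC : ContDiffAt ℝ k (h ∘ ψ) 0 := (hhC.contDiffAt hO_nhds).comp 0 hψC
  obtain ⟨𝒪', h𝒪', hO', h0O'⟩ := _root_.eventually_nhds_iff.1
    ((hαC.eventually (by simp)).and (hψO.and hψ))
  exact ⟨𝒪', hO', h0O', h ∘ ψ, fun y hy => hmap (h𝒪' y hy).2.1, by simp [hψ0, hh0],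
    fun y hy => (h𝒪' y hy).1.contDiffWithinAt, fun y hy => (h𝒪' y hy).2.2⟩

theorem statement9_general
    {n m : ℕ} (k : ℕ) (hk : 1 ≤ k)
    (𝒳 : Set (Vec n)) (𝒰 : Set (Vec m))
    (f : Vec n × Vec m → Vec n)
    (hfc : ContDiffOn ℝ k f (𝒳 ×ˢ 𝒰)) (hf0 : f (0, 0) = 0) :
    (∃ 𝒪 : Set (Vec n), IsOpen 𝒪 ∧ (0 : Vec n) ∈ 𝒪 ∧
        ∃ h : Vec n → Vec n × Vec m, MapsTo h 𝒪 (𝒳 ×ˢ 𝒰) ∧ h 0 = (0, 0) ∧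
          ContDiffOn ℝ k h 𝒪 ∧ UniqCrit 𝒪 (f ∘ h) ∧ LocExpStable 𝒪 (f ∘ h)) ↔
      (∃ 𝒪 : Set (Vec n), IsOpen 𝒪 ∧ (0 : Vec n) ∈ 𝒪 ∧
        ∃ α : Vec n → Vec n × Vec m, MapsTo α 𝒪 (𝒳 ×ˢ 𝒰) ∧ α 0 = (0, 0) ∧
          ContDiffOn ℝ k α 𝒪 ∧ ∀ y ∈ 𝒪, f (α y) = y) := by
  constructor
  · rintro ⟨𝒪, hO, h0O, h, hmap, hh0, hhC, huniq, hstab⟩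
    exact exists_section_of_stabilizing_symbol (by omega) hfc hf0 hO h0O hmap hh0 hhC huniq hstab
  · rintro ⟨𝒪, hO, h0O, α, hmap, hα0, hαC, hsec⟩
    exact exists_stabilizing_symbol_of_section hO h0O hmap hα0 hαC hsec

/-- For `k ≥ 1` and `f` of class `Cᵏ`, the system `ẋ = f (x,u)` is locally
exponentially stabilizable by a composition operator with a `Cᵏ` stationary symbol iff `f` has a
`Cᵏ` stationary local section near the origin. -/
theorem statement9
    {n m : ℕ} (hn : 1 ≤ n) (hm : 1 ≤ m) (k : ℕ) (hk : 1 ≤ k)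
    (𝒳 : Set (Vec n)) (𝒰 : Set (Vec m))
    (hXUopen : IsOpen (𝒳 ×ˢ 𝒰)) (hXU0 : ((0 : Vec n), (0 : Vec m)) ∈ 𝒳 ×ˢ 𝒰)
    (f : Vec n × Vec m → Vec n)
    (hfc : ContDiffOn ℝ k f (𝒳 ×ˢ 𝒰)) (hf0 : f (0, 0) = 0) :
    (∃ 𝒪 : Set (Vec n), IsOpen 𝒪 ∧ (0 : Vec n) ∈ 𝒪 ∧
        ∃ h : Vec n → Vec n × Vec m, MapsTo h 𝒪 (𝒳 ×ˢ 𝒰) ∧ h 0 = (0, 0) ∧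
          ContDiffOn ℝ k h 𝒪 ∧ UniqCrit 𝒪 (f ∘ h) ∧ LocExpStable 𝒪 (f ∘ h)) ↔
      (∃ 𝒪 : Set (Vec n), IsOpen 𝒪 ∧ (0 : Vec n) ∈ 𝒪 ∧
        ∃ α : Vec n → Vec n × Vec m, MapsTo α 𝒪 (𝒳 ×ˢ 𝒰) ∧ α 0 = (0, 0) ∧
          ContDiffOn ℝ k α 𝒪 ∧ ∀ y ∈ 𝒪, f (α y) = y) :=
  statement9_general k hk 𝒳 𝒰 f hfc hf0
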